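/- arXiv:2501.09215 — 9 statements merged into one kernel-verified Lean document; each statement's English description precedes it below -/
import Mathlib

section
/- Let q be a prime power, n ≥ 1, and let A_1, …, A_m and B_1, …, B_m be affine subspaces of the n-dimensional affine space F_q^n (i.e., each is a coset of a linear subspace of F_q^n). Assume the pair of families is cross-intersecting, i.e., A_i ∩ B_i = ∅ for each 1 ≤ i ≤ m and A_i ∩ B_j ≠ ∅ whenever 1 ≤ i < j ≤ m. Then m ≤ 2·(q^n − 1)/(q − 1). -/
open Pointwise

lemma sep_lemma {F : Type*} [Field F] {n : ℕ}
    (v u : Fin n → F) (V U : Submodule F (Fin n → F))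
    (h : (v +ᵥ (V : Set (Fin n → F))) ∩ (u +ᵥ (U : Set (Fin n → F))) = ∅) :
    ∃ (w : Fin n → F) (a b : F), w ≠ 0 ∧ a ≠ b ∧
      (∀ x ∈ v +ᵥ (V : Set (Fin n → F)), ∑ t, x t * w t = a) ∧
      (∀ x ∈ u +ᵥ (U : Set (Fin n → F)), ∑ t, x t * w t = b) := by
  have hx : u - v ∉ V ⊔ U := by
    intro h'
    rw [Submodule.mem_sup] at h'
    obtain ⟨y, hy, z, hz, hyz⟩ := h'
    have h1 : v + y ∈ v +ᵥ (V : Set (Fin n → F)) := ⟨y, hy, rfl⟩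
    have h2 : v + y ∈ u +ᵥ (U : Set (Fin n → F)) := by
      refine ⟨-z, U.neg_mem hz, ?_⟩
      have : u + -z = v + y := by
        have := hyz
        abel_nf
        abel_nf at this
        linear_combination (norm := abel) -this
      exact this
    exact Set.eq_empty_iff_forall_notMem.mp h (v + y) ⟨h1, h2⟩
  obtain ⟨f, hfx, hfmap⟩ := Submodule.exists_dual_map_eq_bot_of_notMem hx inferInstance
  have hker : ∀ y ∈ V ⊔ U, f y = 0 := by
    intro y hy
    have : f y ∈ (V ⊔ U).map f := Submodule.mem_map_of_mem hy
    rwa [hfmap, Submodule.mem_bot] at this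
  set w : Fin n → F := fun t => f (fun j => if t = j then 1 else 0) with hw
  have keyf : ∀ x, ∑ t, x t * w t = f x := by
    intro x
    rw [LinearMap.pi_apply_eq_sum_univ f x]
    simp only [hw, smul_eq_mul]
  have hwne : w ≠ 0 := by
    intro h0
    apply hfx
    rw [← keyf, h0]
    simp
  refine ⟨w, f v, f u, hwne, ?_, ?_, ?_⟩
  · intro hvu
    apply hfx
    rw [map_sub, hvu, sub_self]
  · rintro x ⟨y, hy, rfl⟩
    rw [keyf]
    simp [vadd_eq_add, map_add, hker y (Submodule.mem_sup_left hy)]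
  · rintro x ⟨y, hy, rfl⟩
    rw [keyf]
    simp [vadd_eq_add, map_add, hker y (Submodule.mem_sup_right hy)]

lemma sep_scale {F : Type*} [Field F] {n : ℕ} (c : F) (wv x : Fin n → F) :
    ∑ t, x t * (c • wv) t = c * ∑ t, x t * wv t := by
  simp [Finset.mul_sum, smul_eq_mul, mul_left_comm]


/-- Theorem 2.1 (new upper bound): if `{(Aᵢ, Bᵢ)}` is a cross-intersecting pair of families of
affine subspaces of `F_q^n` (each a coset of a linear subspace), then `m ≤ 2·(qⁿ−1)/(q−1)`. -/
theorem affine_cross_intersecting_upper_bound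
    {F : Type*} [Field F] [Fintype F] (q n m : ℕ)
    (hq : q = Fintype.card F) (hn : 1 ≤ n)
    (A B : Fin m → Set (Fin n → F))
    (hA : ∀ i, ∃ (v : Fin n → F) (V : Submodule F (Fin n → F)),
      A i = v +ᵥ (V : Set (Fin n → F)))
    (hB : ∀ i, ∃ (u : Fin n → F) (U : Submodule F (Fin n → F)),
      B i = u +ᵥ (U : Set (Fin n → F)))
    (hdisj : ∀ i, A i ∩ B i = ∅)
    (hcross : ∀ i j, i < j → (A i ∩ B j).Nonempty) :
    m ≤ 2 * ((q ^ n - 1) / (q - 1)) := by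
  classical
  have H : ∀ i, ∃ (w : Fin n → F) (a b : F), w ≠ 0 ∧ a ≠ b ∧
      (∀ x ∈ A i, ∑ t, x t * w t = a) ∧ (∀ x ∈ B i, ∑ t, x t * w t = b) := by
    intro i
    obtain ⟨v, V, hV⟩ := hA i
    obtain ⟨u, U, hU⟩ := hB i
    have hd := hdisj i
    rw [hV, hU] at hd ⊢
    exact sep_lemma v u V U hd
  choose w a b hwne hab hwA hwB using H
  -- key: no three indices with proportional w
  have key : ∀ i j k : Fin m, i < j → j < k → ∀ c d : F, c ≠ 0 → d ≠ 0 →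
      w j = c • w i → w k = d • w i → False := by
    intro i j k hij hjk c d hc hd hji hki
    obtain ⟨x1, hx1A, hx1B⟩ := hcross i j hij
    obtain ⟨x2, hx2A, hx2B⟩ := hcross i k (hij.trans hjk)
    obtain ⟨x3, hx3A, hx3B⟩ := hcross j k hjk
    have e1 : c * a i = b j := by
      rw [← hwA i x1 hx1A, ← sep_scale, ← hji, hwB j x1 hx1B]
    have e2 : d * a i = b k := by
      rw [← hwA i x2 hx2A, ← sep_scale, ← hki, hwB k x2 hx2B]
    have e3 : c * (∑ t, x3 t * w i t) = a j := by
      rw [← sep_scale, ← hji, hwA j x3 hx3A]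
    have e4 : d * (∑ t, x3 t * w i t) = b k := by
      rw [← sep_scale, ← hki, hwB k x3 hx3B]
    have e5 : (∑ t, x3 t * w i t) = a i := by
      apply mul_left_cancel₀ hd
      rw [e4, ← e2]
    rw [e5, e1] at e3
    exact hab j e3.symm
  -- counting
  set T := {wv : Fin n → F // wv ≠ 0} with hT
  let G : Fin m × Fˣ → T := fun p => ⟨(p.2 : F) • w p.1, smul_ne_zero p.2.ne_zero (hwne p.1)⟩
  have rel : ∀ p q : Fin m × Fˣ, G p = G q → w q.1 = ((q.2⁻¹ : Fˣ) * p.2 : F) • w p.1 := by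
    intro p q hpq
    have h1 : (p.2 : F) • w p.1 = (q.2 : F) • w q.1 := congrArg Subtype.val hpq
    rw [mul_smul, h1, smul_smul, Units.inv_mul, one_smul]
  have inj1 : ∀ p q : Fin m × Fˣ, G p = G q → p.1 = q.1 → p = q := by
    intro p q hpq h1
    have h2 : (p.2 : F) • w p.1 = (q.2 : F) • w q.1 := congrArg Subtype.val hpq
    rw [← h1] at h2
    have h3 : ((p.2 : F) - (q.2 : F)) • w p.1 = 0 := by rw [sub_smul, h2, sub_self]
    have h4 : (p.2 : F) = (q.2 : F) := by
      by_contra hne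
      exact hwne p.1 ((smul_eq_zero.mp h3).resolve_left (sub_ne_zero.mpr hne))
    exact Prod.ext h1 (Units.ext h4)
  have keyP : ∀ p r s : Fin m × Fˣ, p.1 < r.1 → r.1 < s.1 → G p = G r → G p = G s → False := by
    intro p r s h1 h2 hpr hps
    exact key p.1 r.1 s.1 h1 h2 _ _
      (mul_ne_zero (Units.ne_zero _) (Units.ne_zero _))
      (mul_ne_zero (Units.ne_zero _) (Units.ne_zero _))
      (rel p r hpr) (rel p s hps)
  have hfib : ∀ ψ ∈ Finset.univ.image G,
      (Finset.univ.filter fun p => G p = ψ).card ≤ 2 := by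
    intro ψ _
    by_contra hlt
    push_neg at hlt
    obtain ⟨p1, p2, p3, hp1, hp2, hp3, h12, h13, h23⟩ := Finset.two_lt_card_iff.mp hlt
    simp only [Finset.mem_filter] at hp1 hp2 hp3
    have g1 := hp1.2; have g2 := hp2.2; have g3 := hp3.2
    have e12 : G p1 = G p2 := g1.trans g2.symm
    have e13 : G p1 = G p3 := g1.trans g3.symm
    have e23 : G p2 = G p3 := g2.trans g3.symm
    have n12 : p1.1 ≠ p2.1 := fun h => h12 (inj1 p1 p2 e12 h)
    have n13 : p1.1 ≠ p3.1 := fun h => h13 (inj1 p1 p3 e13 h)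
    have n23 : p2.1 ≠ p3.1 := fun h => h23 (inj1 p2 p3 e23 h)
    rcases lt_trichotomy p1.1 p2.1 with h12' | h12' | h12'
    · rcases lt_trichotomy p2.1 p3.1 with h23' | h23' | h23'
      · exact keyP p1 p2 p3 h12' h23' e12 e13
      · exact n23 h23'
      · rcases lt_trichotomy p1.1 p3.1 with h13' | h13' | h13'
        · exact keyP p1 p3 p2 h13' h23' e13 e12
        · exact n13 h13'
        · exact keyP p3 p1 p2 h13' h12' e13.symm e23.symm
    · exact n12 h12'
    · rcases lt_trichotomy p1.1 p3.1 with h13' | h13' | h13'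
      · exact keyP p2 p1 p3 h12' h13' e12.symm e23
      · exact n13 h13'
      · rcases lt_trichotomy p2.1 p3.1 with h23' | h23' | h23'
        · exact keyP p2 p3 p1 h23' h13' e23 e12.symm
        · exact n23 h23'
        · exact keyP p3 p2 p1 h23' h12' e23.symm e13.symm
  have hcount := Finset.card_le_mul_card_image (Finset.univ : Finset (Fin m × Fˣ)) 2 hfib
  have hcard1 : (Finset.univ : Finset (Fin m × Fˣ)).card = m * (q - 1) := by
    rw [Finset.card_univ, Fintype.card_prod, Fintype.card_fin, Fintype.card_units, hq]
  have hcard2 : (Finset.univ.image G).card ≤ q ^ n - 1 := by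
    calc (Finset.univ.image G).card ≤ Fintype.card T := Finset.card_le_univ _
      _ = q ^ n - 1 := by
          show Fintype.card {wv : Fin n → F // wv ≠ 0} = q ^ n - 1
          simp only [ne_eq]
          rw [Fintype.card_subtype_compl, Fintype.card_subtype_eq,
            Fintype.card_fun, Fintype.card_fin, hq]
  have hm : m * (q - 1) ≤ 2 * (q ^ n - 1) := by
    rw [← hcard1]
    exact hcount.trans (Nat.mul_le_mul_left 2 hcard2)
  have hdvd : (q - 1) ∣ (q ^ n - 1) := by
    simpa using Nat.sub_dvd_pow_sub_pow q 1 n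
  have hq2 : 2 ≤ q := by rw [hq]; exact Fintype.one_lt_card
  refine Nat.le_of_mul_le_mul_right ?_ (by omega : 0 < q - 1)
  calc m * (q - 1) ≤ 2 * (q ^ n - 1) := hm
    _ = 2 * ((q ^ n - 1) / (q - 1)) * (q - 1) := by
        rw [mul_assoc, Nat.div_mul_cancel hdvd]
end

section
/- Let q be a prime power and n ≥ 1. There exist affine subspaces A_1, …, A_m and B_1, …, B_m of F_q^n with m = 2·(q^n − 1)/(q − 1) such that the pair of families {(A_i, B_i) : 1 ≤ i ≤ m} is cross-intersecting, i.e., A_i ∩ B_i = ∅ for each 1 ≤ i ≤ m and A_i ∩ B_j ≠ ∅ whenever 1 ≤ i < j ≤ m. -/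
open Pointwise Module Projectivization
open scoped LinearAlgebra.Projectivization

/-! Pair every projective point `[f]` of the dual space with the two parallel hyperplanes
`f = 0` and `f = 1`, once as `(f = 0, f = 1)` and once, immediately after, as `(f = 1, f = 0)`.
Each pair is disjoint; two consecutive pairs of the same point meet in `f = 0`; and hyperplanes
coming from distinct projective points are not parallel, so they meet. Ordering the points
arbitrarily gives `2·|ℙ(V*)| = 2·(qⁿ - 1)/(q - 1)` pairs. -/

def IsCrossIntersecting {ι X : Type*} [LT ι] (A B : ι → Set X) : Prop :=
  (∀ i, A i ∩ B i = ∅) ∧ ∀ i j, i < j → (A i ∩ B j).Nonempty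

lemma IsCrossIntersecting.comp_strictMono {ι κ X : Type*} [Preorder ι] [Preorder κ]
    {A B : ι → Set X} (h : IsCrossIntersecting A B) {e : κ → ι} (he : StrictMono e) :
    IsCrossIntersecting (A ∘ e) (B ∘ e) :=
  ⟨fun k => h.1 (e k), fun _ _ hkl => h.2 _ _ (he hkl)⟩

namespace LinearMap

variable {K V : Type*} [Field K] [AddCommGroup V] [Module K V]

lemma preimage_singleton_eq_vadd_ker (f : V →ₗ[K] K) {x : V} {c : K} (hx : f x = c) :
    f ⁻¹' {c} = x +ᵥ (ker f : Set V) := by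
  ext y
  simp only [Set.mem_preimage, Set.mem_singleton_iff, Set.mem_vadd_set_iff_neg_vadd_mem,
    SetLike.mem_coe, mem_ker, vadd_eq_add, map_add, map_neg, hx]
  rw [neg_add_eq_zero, eq_comm]

lemma exists_preimage_singleton_eq_vadd {f : V →ₗ[K] K} (hf : f ≠ 0) (c : K) :
    ∃ (v : V) (W : Submodule K V), f ⁻¹' {c} = v +ᵥ (W : Set V) :=
  have ⟨x, hx⟩ := LinearMap.surjective hf c
  ⟨x, ker f, f.preimage_singleton_eq_vadd_ker hx⟩

lemma exists_apply_eq_and_apply_eq {f g : V →ₗ[K] K} (hfg : LinearIndependent K ![f, g])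
    (c d : K) : ∃ x, f x = c ∧ g x = d := by
  have hf : f ≠ 0 := by simpa using hfg.ne_zero 0
  obtain ⟨x, hx⟩ := LinearMap.surjective hf c
  have hker : ¬ ker f ≤ ker g := by
    -- otherwise `g` would be a multiple of `f`
    intro hle
    obtain ⟨t, rfl⟩ : ∃ t : K, t • f = g := by
      have := mem_span_of_iInf_ker_le_ker (L := fun _ : Unit => f) (K := g) (by simpa using hle)
      simpa [Submodule.mem_span_singleton] using this
    have := (LinearIndependent.pair_iff.1 hfg t (-1) (by simp)).2
    simp at this
  obtain ⟨y, hy, hgy⟩ := SetLike.not_le_iff_exists.1 hker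
  rw [mem_ker] at hy hgy
  refine ⟨x + ((g y)⁻¹ * (d - g x)) • y, by simp [hx, hy], ?_⟩
  simp only [map_add, map_smul, smul_eq_mul]
  field_simp
  ring

end LinearMap

section

variable {K V κ : Type*} [Field K] [AddCommGroup V] [Module K V] [LinearOrder κ]

def boolHyperplane (f : V →ₗ[K] K) (b : Bool) : Set V := f ⁻¹' {if b then 1 else 0}

lemma boolHyperplane_inter_not (f : V →ₗ[K] K) (b : Bool) :
    boolHyperplane f b ∩ boolHyperplane f (!b) = ∅ := by
  ext x
  cases b <;> simp +contextual [boolHyperplane]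

lemma isCrossIntersecting_boolHyperplane {f : κ → V →ₗ[K] K}
    (hf : Pairwise fun k l => LinearIndependent K ![f k, f l]) :
    IsCrossIntersecting (fun i : κ ×ₗ Bool => boolHyperplane (f (ofLex i).1) (ofLex i).2)
      (fun i => boolHyperplane (f (ofLex i).1) !(ofLex i).2) := by
  refine ⟨fun i => boolHyperplane_inter_not _ _, fun i j hij => ?_⟩
  rcases Prod.Lex.lt_iff.1 hij with hkl | ⟨hkl, hb⟩
  · exact LinearMap.exists_apply_eq_and_apply_eq (hf hkl.ne) _ _
  · obtain ⟨hi, hj⟩ : (ofLex i).2 = false ∧ (ofLex j).2 = true := Bool.lt_iff.1 hb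
    exact ⟨0, by simp [boolHyperplane, hi, hj]⟩

end

theorem exists_affine_cross_intersecting_of_size_two_mul_general
    {F : Type*} [Field F] [Fintype F] (q n : ℕ)
    (hq : q = Fintype.card F) :
    ∃ (m : ℕ) (A B : Fin m → Set (Fin n → F)),
      m = 2 * ((q ^ n - 1) / (q - 1)) ∧
      (∀ i, ∃ (v : Fin n → F) (V : Submodule F (Fin n → F)),
        A i = v +ᵥ (V : Set (Fin n → F))) ∧
      (∀ i, ∃ (u : Fin n → F) (U : Submodule F (Fin n → F)),
        B i = u +ᵥ (U : Set (Fin n → F))) ∧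
      (∀ i, A i ∩ B i = ∅) ∧
      (∀ i j, i < j → (A i ∩ B j).Nonempty) := by
  let dualEquiv := (Pi.basisFun F (Fin n)).toDualEquiv.toEquiv
  have : Finite (Dual F (Fin n → F)) := .of_equiv _ dualEquiv
  have : Finite (ℙ F (Dual F (Fin n → F))) := (finite_iff_of_finite _ _).2 this
  obtain ⟨N, e, hN⟩ : ∃ (N : ℕ) (_ : Fin N ≃ ℙ F (Dual F (Fin n → F))),
      N = (q ^ n - 1) / (q - 1) := by
    refine ⟨_, (Finite.equivFin _).symm, ?_⟩
    rw [card'', Nat.card_congr dualEquiv.symm, hq]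
    simp
  have hf : Pairwise fun k l => LinearIndependent F ![(e k).rep, (e l).rep] :=
    fun k l hkl => linearIndependent_pair_iff_ne.2 (e.injective.ne hkl)
  let o : Fin (2 * N) ≃o Fin N ×ₗ Bool :=
    Fintype.orderIsoFinOfCardEq _ (by rw [Fintype.card_lex]; simp [mul_comm])
  obtain ⟨hdisj, hcross⟩ := (isCrossIntersecting_boolHyperplane hf).comp_strictMono o.strictMono
  exact ⟨_, _, _, by rw [hN],
    fun _ => LinearMap.exists_preimage_singleton_eq_vadd (rep_nonzero _) _,
    fun _ => LinearMap.exists_preimage_singleton_eq_vadd (rep_nonzero _) _, hdisj, hcross⟩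

/-- Theorem 2.2 (construction): for any prime power `q` and `n ≥ 1` there is a
cross-intersecting pair of families of affine subspaces of `F_q^n` of size
`m = 2·(qⁿ−1)/(q−1)`. -/
theorem exists_affine_cross_intersecting_of_size_two_mul
    {F : Type*} [Field F] [Fintype F] (q n : ℕ)
    (hq : q = Fintype.card F) (hn : 1 ≤ n) :
    ∃ (m : ℕ) (A B : Fin m → Set (Fin n → F)),
      m = 2 * ((q ^ n - 1) / (q - 1)) ∧
      (∀ i, ∃ (v : Fin n → F) (V : Submodule F (Fin n → F)),
        A i = v +ᵥ (V : Set (Fin n → F))) ∧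
      (∀ i, ∃ (u : Fin n → F) (U : Submodule F (Fin n → F)),
        B i = u +ᵥ (U : Set (Fin n → F))) ∧
      (∀ i, A i ∩ B i = ∅) ∧
      (∀ i j, i < j → (A i ∩ B j).Nonempty) :=
  exists_affine_cross_intersecting_of_size_two_mul_general q n hq
end

section
/- Let q be a prime power, n ≥ 1, and let H_1, …, H_m be hyperplanes of F_q^n and v_1, …, v_m, u_1, …, u_m ∈ F_q^n. Set A_i = v_i + H_i and B_i = u_i + H_i, and assume the pair of families {(A_i, B_i) : 1 ≤ i ≤ m} is cross-intersecting, i.e., A_i ∩ B_i = ∅ for each 1 ≤ i ≤ m and A_i ∩ B_j ≠ ∅ whenever 1 ≤ i < j ≤ m. Then for every hyperplane H of F_q^n, at most two distinct cosets of H appear among A_1, …, A_m (i.e., the set {A_i : H_i = H} has at most two elements). -/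
open Pointwise

/-- Two cosets of the same submodule that share a point are equal. -/
lemma coset_eq_of_mem {F V : Type*} [Field F] [AddCommGroup V] [Module F V]
    (H : Submodule F V) {p q x : V}
    (hp : x ∈ p +ᵥ (H : Set V)) (hq : x ∈ q +ᵥ (H : Set V)) :
    p +ᵥ (H : Set V) = q +ᵥ (H : Set V) := by
  rw [Set.mem_vadd_set_iff_neg_vadd_mem] at hp hq
  ext y
  rw [Set.mem_vadd_set_iff_neg_vadd_mem, Set.mem_vadd_set_iff_neg_vadd_mem]
  constructor
  · intro hy
    have := H.add_mem (H.sub_mem hq hp) hy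
    simpa [vadd_eq_add] using by
      convert this using 1
      simp [vadd_eq_add]
  · intro hy
    have := H.add_mem (H.sub_mem hp hq) hy
    simpa [vadd_eq_add] using by
      convert this using 1
      simp [vadd_eq_add]

/-- The Claim in the proof of Theorem 2.1: if `Aᵢ = vᵢ + Hᵢ` and `Bᵢ = uᵢ + Hᵢ` with the `Hᵢ`
hyperplanes of `F_q^n` and `{(Aᵢ, Bᵢ)}` is cross-intersecting, then for every hyperplane `H`
at most two distinct cosets of `H` appear among the `Aᵢ`. -/
theorem at_most_two_cosets_of_same_hyperplane
    {F : Type*} [Field F] [Fintype F] (n m : ℕ) (hn : 1 ≤ n)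
    (Hs : Fin m → Submodule F (Fin n → F))
    (hHs : ∀ i, Module.finrank F (Hs i) = n - 1)
    (v u : Fin m → (Fin n → F))
    (A B : Fin m → Set (Fin n → F))
    (hA : ∀ i, A i = v i +ᵥ (Hs i : Set (Fin n → F)))
    (hB : ∀ i, B i = u i +ᵥ (Hs i : Set (Fin n → F)))
    (hdisj : ∀ i, A i ∩ B i = ∅)
    (hcross : ∀ i j, i < j → (A i ∩ B j).Nonempty)
    (H : Submodule F (Fin n → F)) (hH : Module.finrank F H = n - 1) :
    {s : Set (Fin n → F) | ∃ i, Hs i = H ∧ A i = s}.ncard ≤ 2 := by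
  -- key: if i < k and j < k, all with hyperplane H, then A i = A j
  have key : ∀ i j k : Fin m, Hs i = H → Hs j = H → Hs k = H →
      i < k → j < k → A i = A j := by
    have eqB : ∀ i k : Fin m, Hs i = H → Hs k = H → i < k → A i = B k := by
      intro i k hi hk hik
      obtain ⟨x, hxA, hxB⟩ := hcross i k hik
      rw [hA i, hi] at hxA ⊢
      rw [hB k, hk] at hxB ⊢
      exact coset_eq_of_mem H hxA hxB
    intro i j k hi hj hk hik hjk
    rw [eqB i k hi hk hik, eqB j k hj hk hjk]
  by_contra hcon
  push_neg at hcon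
  have hfin : {s : Set (Fin n → F) | ∃ i, Hs i = H ∧ A i = s}.Finite := by
    have : {s : Set (Fin n → F) | ∃ i, Hs i = H ∧ A i = s} ⊆ Set.range A := by
      rintro s ⟨i, _, rfl⟩; exact ⟨i, rfl⟩
    exact (Set.finite_range A).subset this
  rw [show (2 : ℕ) < _ ↔ _ from Set.two_lt_ncard hfin] at hcon
  obtain ⟨a, ha, b, hb, c, hc, hab, hac, hbc⟩ := hcon
  obtain ⟨i, hi, rfl⟩ := ha
  obtain ⟨j, hj, rfl⟩ := hb
  obtain ⟨k, hk, rfl⟩ := hc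
  have hij : i ≠ j := fun h => hab (by rw [h])
  have hik : i ≠ k := fun h => hac (by rw [h])
  have hjk : j ≠ k := fun h => hbc (by rw [h])
  rcases lt_or_gt_of_ne hij with h1 | h1 <;>
  rcases lt_or_gt_of_ne hik with h2 | h2 <;>
  rcases lt_or_gt_of_ne hjk with h3 | h3
  · exact hab (key i j k hi hj hk h2 h3)
  · exact hac (key i k j hi hk hj h1 h3)
  · exact absurd (h3.trans h2) (lt_asymm h1)
  · exact hac (key i k j hi hk hj h1 h3)
  · exact hab (key i j k hi hj hk h2 h3)
  · exact absurd (h3.trans h1) (lt_asymm h2)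
  · exact hbc (key j k i hj hk hi h1 h2)
  · exact hbc (key j k i hj hk hi h1 h2)
end

section
/- Let n ≥ 1 and let A_1, …, A_m and B_1, …, B_m be nonzero linear subspaces of F_2^{n+1} (representing nonempty projective subspaces of the n-dimensional projective space over F_2). Assume the pair of families is cross-intersecting in the projective sense: A_i ∩ B_i = {0} for each 1 ≤ i ≤ m and A_i ∩ B_j ≠ {0} whenever 1 ≤ i < j ≤ m. Then m ≤ 2^{n+1} − 2. -/
/-!
Over `𝔽₂`, the indicator functions of `{0}`, of the whole space `V` and of `A₁, …, Aₘ` are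
linearly independent in `V → 𝔽₂`, so `m + 2 ≤ |V|`. To see this, pair the indicator of a
subspace `A` with the functional "sum over the coset `a + B`": the result is `|A ∩ (a + B)|`
mod 2, which is `1` if `a ∈ A` and `A ∩ B = 0`, and `0` if `a ∉ A + B` or `A ∩ B ≠ 0` (then
translating by a nonzero vector of `A ∩ B` pairs off the points). Choosing `aⱼ ∈ Aⱼ` nonzero,
the cross-intersecting condition makes the pairing matrix triangular with unit diagonal.
-/

open Finset

theorem linearIndependent_of_triangular_pairing {ι R M : Type*} [Fintype ι] [LinearOrder ι]
    [CommRing R] [IsDomain R] [AddCommGroup M] [Module R M] (f : ι → M) (φ : ι → Module.Dual R M)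
    (hdiag : ∀ i, φ i (f i) ≠ 0) (hlower : ∀ i j, i < j → φ j (f i) = 0) :
    LinearIndependent R f := by
  classical
  let P : Matrix ι ι R := .of fun i j => φ j (f i)
  have hdet : P.det ≠ 0 := by
    rw [Matrix.det_of_isLowerTriangular P fun i j hij => hlower i j hij]
    exact prod_ne_zero_iff.2 fun i _ => hdiag i
  exact .of_comp (LinearMap.pi φ) (Matrix.linearIndependent_rows_of_det_ne_zero hdet)

section

variable {V : Type*} [AddCommGroup V] [Module (ZMod 2) V]

/-- `C k` is paired with the coset `x k + D k`; `lower` lists the two ways in which, for `k < l`,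
the coset `x l + D l` meets `C k` in an even number of points. -/
structure IsTriangularFamily {ι : Type*} [LT ι] (C D : ι → Submodule (ZMod 2) V) (x : ι → V) :
    Prop where
  mem : ∀ k, x k ∈ C k
  inf_eq_bot : ∀ k, C k ⊓ D k = ⊥
  lower : ∀ k l, k < l → C k ⊓ D l ≠ ⊥ ∨ x l ∉ C k ⊔ D l

theorem IsTriangularFamily.cons {m : ℕ} {C D : Fin m → Submodule (ZMod 2) V} {x : Fin m → V}
    (h : IsTriangularFamily C D x) {c d : Submodule (ZMod 2) V} {y : V} (hy : y ∈ c)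
    (hcd : c ⊓ d = ⊥) (hlower : ∀ l, c ⊓ D l ≠ ⊥ ∨ x l ∉ c ⊔ D l) :
    IsTriangularFamily (Fin.cons c C : Fin (m + 1) → _) (Fin.cons d D) (Fin.cons y x) where
  mem := Fin.cases hy h.mem
  inf_eq_bot := Fin.cases hcd h.inf_eq_bot
  lower k l hkl := by
    cases l using Fin.cases with
    | zero => exact absurd hkl (Fin.not_lt_zero k)
    | succ l =>
      cases k using Fin.cases with
      | zero => exact hlower l
      | succ k => exact h.lower k l (Fin.succ_lt_succ_iff.1 hkl)

variable [Fintype V]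

noncomputable def cosetSum (a : V) (B : Submodule (ZMod 2) V) :
    Module.Dual (ZMod 2) (V → ZMod 2) :=
  ∑ y, (B : Set V).indicator (1 : V → ZMod 2) y • LinearMap.proj (a + y)

variable {a : V} {A B : Submodule (ZMod 2) V}

theorem cosetSum_apply (f : V → ZMod 2) :
    cosetSum a B f = ∑ y, (B : Set V).indicator (1 : V → ZMod 2) y * f (a + y) := by
  simp [cosetSum]

theorem cosetSum_indicator_of_mem_of_inf_eq_bot (ha : a ∈ A) (hAB : A ⊓ B = ⊥) :
    cosetSum a B ((A : Set V).indicator 1) = 1 := by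
  rw [cosetSum_apply, sum_eq_single 0]
  · simp [ha]
  · intro y _ hy
    by_contra h
    have hyB : y ∈ B := by by_contra h'; simp [h'] at h
    have hyA : a + y ∈ A := by by_contra h'; simp [h'] at h
    have : y ∈ A ⊓ B := ⟨(A.add_mem_iff_right ha).1 hyA, hyB⟩
    simp [hAB, hy] at this
  · simp

theorem cosetSum_indicator_of_notMem_sup (ha : a ∉ A ⊔ B) :
    cosetSum a B ((A : Set V).indicator 1) = 0 := by
  rw [cosetSum_apply]
  refine sum_eq_zero fun y _ => ?_
  by_cases hyB : y ∈ B
  · have : a + y ∉ A := fun h =>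
      ha (by simpa using (A ⊔ B).sub_mem (Submodule.mem_sup_left h) (Submodule.mem_sup_right hyB))
    simp [this]
  · simp [hyB]

theorem cosetSum_indicator_of_inf_ne_bot (hAB : A ⊓ B ≠ ⊥) (a : V) :
    cosetSum a B ((A : Set V).indicator 1) = 0 := by
  classical
  obtain ⟨w, ⟨hwA, hwB⟩, hw⟩ := (Submodule.ne_bot_iff _).1 hAB
  have hww : w + w = 0 := by
    rw [← two_smul (ZMod 2), show (2 : ZMod 2) = 0 from rfl, zero_smul]
  -- translation by `w` is a fixed-point-free involution leaving each summand unchanged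
  rw [cosetSum_apply]
  refine sum_ninvolution (· + w) (fun y => ?_) (fun y _ => by simpa using hw) (by simp)
    (fun y => by rw [add_assoc, hww, add_zero])
  have hB : y + w ∈ B ↔ y ∈ B := B.add_mem_iff_left hwB
  have hA : a + (y + w) ∈ A ↔ a + y ∈ A := by rw [← add_assoc]; exact A.add_mem_iff_left hwA
  simp only [Set.indicator_apply, SetLike.mem_coe, hB, hA, Pi.one_apply]
  exact CharTwo.add_self_eq_zero _

theorem IsTriangularFamily.linearIndependent {ι : Type*} [Fintype ι] [LinearOrder ι]
    {C D : ι → Submodule (ZMod 2) V} {x : ι → V} (h : IsTriangularFamily C D x) :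
    LinearIndependent (ZMod 2) fun k => (C k : Set V).indicator (1 : V → ZMod 2) :=
  linearIndependent_of_triangular_pairing _ (fun k => cosetSum (x k) (D k))
    (fun k => by rw [cosetSum_indicator_of_mem_of_inf_eq_bot (h.mem k) (h.inf_eq_bot k)]; decide)
    fun k l hkl => (h.lower k l hkl).elim (cosetSum_indicator_of_inf_ne_bot · _)
      cosetSum_indicator_of_notMem_sup

theorem add_two_le_card_of_crossIntersecting [Nontrivial V] {m : ℕ}
    (A B : Fin m → Submodule (ZMod 2) V) (hA : ∀ i, A i ≠ ⊥) (hB : ∀ i, B i ≠ ⊥)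
    (hdisj : ∀ i, A i ⊓ B i = ⊥) (hcross : ∀ i j, i < j → A i ⊓ B j ≠ ⊥) :
    m + 2 ≤ Fintype.card V := by
  choose a haA ha0 using fun i => (Submodule.ne_bot_iff (A i)).1 (hA i)
  have ha_notMem : ∀ i, a i ∉ B i := fun i haB =>
    ha0 i (Submodule.disjoint_def.1 (disjoint_iff.2 (hdisj i)) _ (haA i) haB)
  obtain ⟨v, hv⟩ := exists_ne (0 : V)
  have hAB : IsTriangularFamily A B a := ⟨haA, hdisj, fun i j hij => .inl (hcross i j hij)⟩
  -- prepend `(⊥, ⊥, 0)` and `(⊤, ⊥, v)`, whose indicators are those of `{0}` and of `V`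
  have hext := (hAB.cons (c := ⊤) (d := ⊥) (y := v) trivial (inf_bot_eq _)
    fun l => .inl (by simpa using hB l)).cons (c := ⊥) (d := ⊥) (y := 0) (zero_mem _)
    (inf_bot_eq _) (Fin.cases (.inr (by simpa using hv)) fun j => .inr (by simpa using ha_notMem j))
  have hcard := hext.linearIndependent.fintype_card_le_finrank
  rwa [Module.finrank_fintype_fun_eq_card, Fintype.card_fin] at hcard

end

theorem projective_cross_intersecting_bound_two_general
    (n m : ℕ)
    (A B : Fin m → Submodule (ZMod 2) (Fin (n + 1) → ZMod 2))
    (hA : ∀ i, A i ≠ ⊥) (hB : ∀ i, B i ≠ ⊥)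
    (hdisj : ∀ i, A i ⊓ B i = ⊥)
    (hcross : ∀ i j, i < j → A i ⊓ B j ≠ ⊥) :
    m ≤ 2 ^ (n + 1) - 2 := by
  have hcard := add_two_le_card_of_crossIntersecting A B hA hB hdisj hcross
  simp only [Fintype.card_fun, ZMod.card, Fintype.card_fin] at hcard
  omega

/-- Hegedűs' conjecture for `q = 2`: if `A₁, …, Aₘ` and `B₁, …, Bₘ` are nonzero linear
subspaces of `F_2^{n+1}` (nonempty projective subspaces of `n`-dimensional projective space
over `F_2`) with `Aᵢ ∩ Bᵢ = {0}` for all `i` and `Aᵢ ∩ Bⱼ ≠ {0}` for `i < j`, then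
`m ≤ 2^{n+1} − 2`. -/
theorem projective_cross_intersecting_bound_two
    (n m : ℕ) (hn : 1 ≤ n)
    (A B : Fin m → Submodule (ZMod 2) (Fin (n + 1) → ZMod 2))
    (hA : ∀ i, A i ≠ ⊥) (hB : ∀ i, B i ≠ ⊥)
    (hdisj : ∀ i, A i ⊓ B i = ⊥)
    (hcross : ∀ i j, i < j → A i ⊓ B j ≠ ⊥) :
    m ≤ 2 ^ (n + 1) - 2 :=
  projective_cross_intersecting_bound_two_general n m A B hA hB hdisj hcross
end

section
/- Let q be a prime power, n ≥ 1, and let A_1, …, A_m and B_1, …, B_m be nonzero linear subspaces of F_q^{n+1} (representing nonempty projective subspaces of the n-dimensional projective space over F_q). Assume the pair of families is cross-intersecting in the projective sense: A_i ∩ B_i = {0} for each 1 ≤ i ≤ m and A_i ∩ B_j ≠ {0} whenever 1 ≤ i < j ≤ m. Then m ≤ (q^{n+1} − 1)/(q − 1) − 1. -/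
open Module Finset

/-
Extend each `A i` to a complement `C i` of `B i`, and let `π i` be the projection onto `B i`
along `C i`. Among the pairs with `dim B i = b`, the forms `v ↦ det (π i ∘ v)` pair triangularly
with the `b`-vectors `⋀ B j`: the pairing is `1` for `j = i` and `0` for `i < j`, since then
`B j` meets `ker (π i) = C i ⊇ A i`. Hence the `⋀ B j` are linearly independent in
`⋀^b F^{n+1}`, so at most `(n+1).choose b` pairs have `dim B i = b`. As `1 ≤ b ≤ n`, summing
over `b` gives `m ≤ 2^{n+1} - 2 ≤ q + q^2 + ⋯ + q^n`.
-/

theorem LinearIndependent.of_triangular_pairing {K W ι : Type*} [Field K]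
    [AddCommGroup W] [Module K W] [Fintype ι] [LinearOrder ι] {x : ι → W} (E : ι → W →ₗ[K] K)
    (hdiag : ∀ i, E i (x i) ≠ 0) (htri : ∀ i j, i < j → E i (x j) = 0) :
    LinearIndependent K x := by
  classical
  let M : Matrix ι ι K := Matrix.of fun i j => E j (x i)
  have hM : M.IsUpperTriangular := fun i j hji => htri j i hji
  have hdet : M.det ≠ 0 := by
    rw [Matrix.det_of_isUpperTriangular hM]
    exact prod_ne_zero_iff.2 fun i _ => hdiag i
  exact .of_comp (LinearMap.pi E) (Matrix.linearIndependent_rows_of_det_ne_zero hdet)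

section CrossIntersecting

variable {K V : Type*} [Field K] [AddCommGroup V] [Module K V]

theorem AlternatingMap.compLinearMap_apply_eq_zero_of_not_disjoint {N ι : Type*}
    [AddCommGroup N] [Module K N] (f : N [⋀^ι]→ₗ[K] K) (g : V →ₗ[K] N) {v : ι → V}
    (hv : ¬Disjoint (Submodule.span K (Set.range v)) (LinearMap.ker g)) :
    f.compLinearMap g v = 0 :=
  f.map_linearDependent _ fun h => hv (Submodule.range_ker_disjoint h)

theorem Module.Basis.det_compLinearMap_projectionOnto_self {ι : Type*} [Fintype ι] [DecidableEq ι]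
    {p q : Submodule K V} (h : IsCompl p q) (e : Basis ι K p) :
    e.det.compLinearMap (p.projectionOnto q h) (fun k => (e k : V)) = 1 := by
  simpa [Submodule.projectionOnto_apply_left] using e.det_self

theorem Module.Basis.span_range_coe {ι : Type*} {p : Submodule K V} (e : Basis ι K p) :
    Submodule.span K (Set.range fun k => (e k : V)) = p := by
  change Submodule.span K (Set.range (p.subtype ∘ e)) = p
  rw [Set.range_comp, Submodule.span_image, e.span_eq, Submodule.map_subtype_top]

theorem card_le_choose_of_crossIntersecting [FiniteDimensional K V] {ι : Type*} [Fintype ι]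
    [LinearOrder ι] {b : ℕ} (A B : ι → Submodule K V) (hB : ∀ i, finrank K (B i) = b)
    (hdisj : ∀ i, Disjoint (A i) (B i)) (hcross : ∀ i j, i < j → ¬Disjoint (A i) (B j)) :
    Fintype.card ι ≤ (finrank K V).choose b := by
  choose C hAC hCB using fun i => (hdisj i).exists_isCompl
  let e i : Basis (Fin b) K (B i) := finBasisOfFinrankEq K (B i) (hB i)
  let α i : V [⋀^Fin b]→ₗ[K] K :=
    (e i).det.compLinearMap ((B i).projectionOnto (C i) (hCB i).symm)
  have hli : LinearIndependent K fun i => exteriorPower.ιMulti K b fun k => (e i k : V) := by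
    refine .of_triangular_pairing (fun i => exteriorPower.alternatingMapLinearEquiv (α i))
      (fun i => ?_) (fun i j hij => ?_)
    · simp only [exteriorPower.alternatingMapLinearEquiv_apply_ιMulti, α,
        Basis.det_compLinearMap_projectionOnto_self]
      exact one_ne_zero
    · rw [exteriorPower.alternatingMapLinearEquiv_apply_ιMulti]
      refine AlternatingMap.compLinearMap_apply_eq_zero_of_not_disjoint _ _ fun h => ?_
      rw [(e j).span_range_coe, Submodule.ker_projectionOnto] at h
      exact hcross i j hij (h.symm.mono_left (hAC i))
  simpa [exteriorPower.finrank_eq] using hli.fintype_card_le_finrank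

end CrossIntersecting

theorem sum_Ico_choose_add_one_le_geomSum {q : ℕ} (hq : 2 ≤ q) (n : ℕ) :
    ∑ b ∈ Ico 1 (n + 1), (n + 1).choose b + 1 ≤ ∑ i ∈ range (n + 1), q ^ i := by
  have hchoose : ∑ b ∈ Ico 1 (n + 1), (n + 1).choose b + 2 = 2 ^ (n + 1) := by
    rw [← Nat.sum_range_choose, sum_range_succ, sum_range_eq_add_Ico _ n.succ_pos]
    simp only [Nat.choose_zero_right, Nat.choose_self]
    ring
  have hgeom2 : ∑ i ∈ range (n + 1), 2 ^ i + 1 = 2 ^ (n + 1) := by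
    rw [Nat.geomSum_eq le_rfl, Nat.div_one]
    exact Nat.sub_add_cancel Nat.one_le_two_pow
  have hle : ∑ i ∈ range (n + 1), 2 ^ i ≤ ∑ i ∈ range (n + 1), q ^ i :=
    sum_le_sum fun i _ => Nat.pow_le_pow_left hq i
  omega

theorem projective_cross_intersecting_bound_general
    {F : Type*} [Field F] [Fintype F] (q n m : ℕ)
    (hq : q = Fintype.card F)
    (A B : Fin m → Submodule F (Fin (n + 1) → F))
    (hA : ∀ i, A i ≠ ⊥) (hB : ∀ i, B i ≠ ⊥)
    (hdisj : ∀ i, A i ⊓ B i = ⊥)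
    (hcross : ∀ i j, i < j → A i ⊓ B j ≠ ⊥) :
    m ≤ (q ^ (n + 1) - 1) / (q - 1) - 1 := by
  classical
  let d i := finrank F (B i)
  have hd : ∀ i, d i ∈ Ico 1 (n + 1) := fun i => by
    have hpos : 0 < d i := Submodule.one_le_finrank_iff.2 (hB i)
    have hlt : d i < n + 1 := by
      refine (Submodule.finrank_lt fun htop => hA i ?_).trans_eq (finrank_fin_fun F)
      simpa [htop] using hdisj i
    exact mem_Ico.2 ⟨hpos, hlt⟩
  have hclass : ∀ b, #{i | d i = b} ≤ (n + 1).choose b := fun b => by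
    have := card_le_choose_of_crossIntersecting (ι := {i // d i = b}) (fun i => A i)
      (fun i => B i) (fun i => i.2) (fun i => disjoint_iff.2 (hdisj i))
      (fun i j hij h => hcross i j hij (disjoint_iff.1 h))
    rwa [finrank_fin_fun, Fintype.card_subtype] at this
  have hq2 : 2 ≤ q := hq ▸ Fintype.one_lt_card
  have hsum := sum_Ico_choose_add_one_le_geomSum hq2 n
  rw [Nat.geomSum_eq hq2] at hsum
  calc m = ∑ b ∈ Ico 1 (n + 1), #{i | d i = b} := by
        simpa using card_eq_sum_card_fiberwise (s := univ) fun i _ => hd i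
    _ ≤ ∑ b ∈ Ico 1 (n + 1), (n + 1).choose b := sum_le_sum fun b _ => hclass b
    _ ≤ (q ^ (n + 1) - 1) / (q - 1) - 1 := by omega

/-- Theorem 3.1: if `A₁, …, Aₘ` and `B₁, …, Bₘ` are nonzero linear subspaces of `F_q^{n+1}`
(nonempty projective subspaces of `n`-dimensional projective space over `F_q`) with
`Aᵢ ∩ Bᵢ = {0}` for all `i` and `Aᵢ ∩ Bⱼ ≠ {0}` for `i < j`, then
`m ≤ (q^{n+1} − 1)/(q − 1) − 1`. -/
theorem projective_cross_intersecting_bound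
    {F : Type*} [Field F] [Fintype F] (q n m : ℕ)
    (hq : q = Fintype.card F) (hn : 1 ≤ n)
    (A B : Fin m → Submodule F (Fin (n + 1) → F))
    (hA : ∀ i, A i ≠ ⊥) (hB : ∀ i, B i ≠ ⊥)
    (hdisj : ∀ i, A i ⊓ B i = ⊥)
    (hcross : ∀ i j, i < j → A i ⊓ B j ≠ ⊥) :
    m ≤ (q ^ (n + 1) - 1) / (q - 1) - 1 :=
  projective_cross_intersecting_bound_general q n m hq A B hA hB hdisj hcross
end

section
/- Let A_1, …, A_m and B_1, …, B_m be finite sets such that A_i ∩ B_j = ∅ if and only if i = j. Then the sum over i = 1, …, m of 1 / C(|A_i| + |B_i|, |A_i|) is at most 1, where C(a, b) denotes the binomial coefficient. -/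
/-!
Let `X` be the union of all the sets and `w(a, b) = 1 / C(a + b, a)`. For `x ∈ X`, deleting `x`
from every `Aᵢ` and keeping only the pairs with `x ∉ Bᵢ` gives a system of the same kind on
`X \ {x}`, so by induction its weights sum to at most `1`. Summing over `x ∈ X` counts the pair
`i` once for each `x ∈ X \ Bᵢ`, and `∑_{x ∈ X \ Bᵢ} w(|Aᵢ \ {x}|, |Bᵢ|) = |X| · w(|Aᵢ|, |Bᵢ|)`
because `a · w(a - 1, b) = (a + b) · w(a, b)`. Hence `|X| · ∑ᵢ w(|Aᵢ|, |Bᵢ|) ≤ |X|`. This needs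
every `Aᵢ` nonempty; an empty `Aᵢ` is disjoint from every `Bⱼ`, so then `i` is the only index.
-/

open Finset

namespace Bollobas

variable {α ι : Type*}

def weight (a b : ℕ) : ℚ := 1 / (a + b).choose a

lemma weight_zero_left (b : ℕ) : weight 0 b = 1 := by
  simp [weight]

lemma mul_weight_pred {a : ℕ} (ha : 0 < a) (b : ℕ) :
    a * weight (a - 1) b = (a + b) * weight a b := by
  obtain ⟨a, rfl⟩ := Nat.exists_eq_add_one_of_ne_zero ha.ne'
  have hchoose := Nat.add_one_mul_choose_eq (a + b) a
  rw [show a + b + 1 = a + 1 + b by omega] at hchoose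
  have hcast : ((a + 1 + b).choose (a + 1) : ℚ) * (a + 1) = (a + 1 + b) * (a + b).choose a := by
    exact_mod_cast hchoose.symm
  have hpos : ((a + b).choose a : ℚ) ≠ 0 := Nat.cast_ne_zero.mpr (Nat.choose_pos (by omega)).ne'
  have hpos' : ((a + 1 + b).choose (a + 1) : ℚ) ≠ 0 :=
    Nat.cast_ne_zero.mpr (Nat.choose_pos (by omega)).ne'
  simp only [weight, Nat.add_sub_cancel]
  push_cast
  field_simp
  linear_combination hcast

def IsSetPairSystem (I : Finset ι) (A B : ι → Finset α) : Prop :=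
  ∀ i ∈ I, ∀ j ∈ I, Disjoint (A i) (B j) ↔ i = j

lemma IsSetPairSystem.eq_singleton_of_eq_empty {I : Finset ι} {A B : ι → Finset α}
    (h : IsSetPairSystem I A B) {i : ι} (hi : i ∈ I)
    (hA : A i = ∅) : I = {i} :=
  eq_singleton_iff_unique_mem.mpr ⟨hi, fun j hj => ((h i hi j hj).mp (by simp [hA])).symm⟩

variable [DecidableEq α]

lemma sum_weight_erase {s t X : Finset α} (hs : s.Nonempty) (hst : Disjoint s t)
    (hX : s ∪ t ⊆ X) :
    ∑ x ∈ X \ t, weight #(s.erase x) #t = #X * weight #s #t := by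
  have hsplit : X \ t = s.disjUnion (X \ (s ∪ t)) (disjoint_sdiff.mono_right
      (sdiff_subset_sdiff le_rfl subset_union_left)) := by
    ext x
    have hsX : x ∈ s → x ∈ X := fun hx => hX (mem_union_left t hx)
    have hst' : x ∈ s → x ∉ t := fun hx => disjoint_left.mp hst hx
    simp only [disjUnion_eq_union, mem_union, mem_sdiff]
    tauto
  have hcard : #(X \ (s ∪ t)) = #X - (#s + #t) := by
    rw [card_sdiff_of_subset hX, card_union_of_disjoint hst]
  have hle : #s + #t ≤ #X := (card_union_of_disjoint hst).symm.trans_le (card_le_card hX)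
  have hin : ∑ x ∈ s, weight #(s.erase x) #t = ∑ _x ∈ s, weight (#s - 1) #t :=
    sum_congr rfl fun x hx => by rw [card_erase_of_mem hx]
  have hout : ∑ x ∈ X \ (s ∪ t), weight #(s.erase x) #t = ∑ _x ∈ X \ (s ∪ t), weight #s #t :=
    sum_congr rfl fun x hx => by rw [erase_eq_of_notMem (by simp_all)]
  rw [hsplit, sum_disjUnion, hin, hout, sum_const, sum_const, nsmul_eq_mul, nsmul_eq_mul,
    mul_weight_pred (card_pos.mpr hs), hcard, Nat.cast_sub hle]
  push_cast
  ring

namespace IsSetPairSystem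

variable {I : Finset ι} {A B : ι → Finset α}

lemma erase (h : IsSetPairSystem I A B) (x : α) :
    IsSetPairSystem {i ∈ I | x ∉ B i} (fun i => (A i).erase x) B := by
  intro i hi j hj
  rw [mem_filter] at hi hj
  rw [disjoint_erase_comm, erase_eq_of_notMem hj.2]
  exact h i hi.1 j hj.1

lemma sum_weight_le_one_of_subset {X : Finset α} (h : IsSetPairSystem I A B)
    (hX : ∀ i ∈ I, A i ∪ B i ⊆ X) : ∑ i ∈ I, weight #(A i) #(B i) ≤ 1 := by
  induction X using Finset.strongInduction generalizing I A with
  | H X ih =>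
  by_cases hempty : ∃ i ∈ I, A i = ∅
  · obtain ⟨i, hi, hA⟩ := hempty
    simp [h.eq_singleton_of_eq_empty hi hA, hA, weight_zero_left]
  push Not at hempty
  rcases I.eq_empty_or_nonempty with rfl | ⟨i₀, hi₀⟩
  · simp
  have hXpos : (0 : ℚ) < #X := by
    obtain ⟨x, hx⟩ := hempty i₀ hi₀
    exact_mod_cast card_pos.mpr ⟨x, hX i₀ hi₀ (mem_union_left _ hx)⟩
  have hlocal : ∀ x ∈ X, ∑ i ∈ I with x ∉ B i, weight #((A i).erase x) #(B i) ≤ 1 := by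
    refine fun x hx => ih _ (erase_ssubset hx) (h.erase x) fun i hi => ?_
    rw [← erase_eq_of_notMem (mem_filter.mp hi).2, ← erase_union_distrib]
    exact erase_subset_erase x (hX i (mem_filter.mp hi).1)
  refine le_of_mul_le_mul_left ?_ hXpos
  calc #X * ∑ i ∈ I, weight #(A i) #(B i)
      = ∑ i ∈ I, ∑ x ∈ X \ B i, weight #((A i).erase x) #(B i) := by
        rw [mul_sum]
        exact sum_congr rfl fun i hi => (sum_weight_erase (hempty i hi) ((h i hi i hi).mpr rfl)
          (hX i hi)).symm
    _ = ∑ x ∈ X, ∑ i ∈ I with x ∉ B i, weight #((A i).erase x) #(B i) :=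
        sum_comm' fun _ _ => by simp only [mem_sdiff, mem_filter]; tauto
    _ ≤ ∑ _x ∈ X, 1 := sum_le_sum hlocal
    _ = #X * 1 := by simp

theorem sum_weight_le_one (h : IsSetPairSystem I A B) : ∑ i ∈ I, weight #(A i) #(B i) ≤ 1 :=
  h.sum_weight_le_one_of_subset fun _ hi => subset_biUnion_of_mem (fun i => A i ∪ B i) hi

end IsSetPairSystem

end Bollobas

/-- Bollobás' theorem (Theorem 1.1): if `Aᵢ ∩ Bⱼ = ∅` iff `i = j`, then
`∑ᵢ 1 / C(|Aᵢ| + |Bᵢ|, |Aᵢ|) ≤ 1`. -/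
theorem bollobas_inequality {α : Type*} [DecidableEq α] (m : ℕ)
    (A B : Fin m → Finset α)
    (h : ∀ i j, A i ∩ B j = ∅ ↔ i = j) :
    ∑ i, (1 : ℚ) / (((A i).card + (B i).card).choose (A i).card) ≤ 1 :=
  Bollobas.IsSetPairSystem.sum_weight_le_one (I := univ) fun i _ j _ =>
    disjoint_iff_inter_eq_empty.trans (h i j)
end

section
/- Let A_1, …, A_m be finite sets each of cardinality r and B_1, …, B_m be finite sets each of cardinality s, such that A_i ∩ B_i = ∅ for each 1 ≤ i ≤ m and A_i ∩ B_j ≠ ∅ for all 1 ≤ i < j ≤ m. Then m ≤ C(r + s, r), where C(a, b) denotes the binomial coefficient. -/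
open Finset Polynomial

/-- The multiset class of a function on a fintype of cardinality `s`. -/
def symCls {ι β : Type*} [Fintype ι] {s : ℕ} (h : Fintype.card ι = s) (φ : ι → β) :
    Sym β s :=
  ⟨(Finset.univ : Finset ι).val.map φ, by
    rw [Multiset.card_map]; simpa using h⟩

lemma expand_prod_sum {ι β : Type*} [Fintype ι] [Fintype β] [DecidableEq ι] [DecidableEq β]
    {s : ℕ} (h : Fintype.card ι = s) (c : β → ℝ) (g : ι → β → ℝ) :
    ∏ i : ι, (∑ k : β, c k * g i k) =
      ∑ μ : Sym β s, (μ.1.map c).prod *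
        (∑ φ ∈ (Finset.univ : Finset (ι → β)).filter (fun φ => symCls h φ = μ),
          ∏ i : ι, g i (φ i)) := by
  classical
  rw [Fintype.prod_sum (fun i k => c k * g i k)]
  have key : ∀ φ : ι → β,
      ∏ i, (c (φ i) * g i (φ i)) = ((symCls h φ).1.map c).prod * ∏ i, g i (φ i) := by
    intro φ
    rw [Finset.prod_mul_distrib]
    congr 1
    rw [symCls]
    simp only [Multiset.map_map]
    rw [Finset.prod_eq_multiset_prod]
    rfl
  calc ∑ φ : ι → β, ∏ i, (c (φ i) * g i (φ i))
      = ∑ φ : ι → β, ((symCls h φ).1.map c).prod * ∏ i, g i (φ i) := by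
        exact Finset.sum_congr rfl fun φ _ => key φ
    _ = ∑ μ : Sym β s, ∑ φ ∈ (Finset.univ : Finset (ι → β)).filter (fun φ => symCls h φ = μ),
          ((symCls h φ).1.map c).prod * ∏ i, g i (φ i) :=
        (Finset.sum_fiberwise _ (fun φ => symCls h φ) _).symm
    _ = ∑ μ : Sym β s, (μ.1.map c).prod *
          (∑ φ ∈ (Finset.univ : Finset (ι → β)).filter (fun φ => symCls h φ = μ),
            ∏ i : ι, g i (φ i)) := by
        refine Finset.sum_congr rfl fun μ _ => ?_
        rw [Finset.mul_sum]
        refine Finset.sum_congr rfl fun φ hφ => ?_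
        rw [(Finset.mem_filter.1 hφ).2]

lemma prod_linear_eq_sum {α : Type*} {r : ℕ} (A : Finset α) (hA : A.card = r)
    (t : α → ℝ) (z : ℝ) :
    ∏ a ∈ A, (z - t a) =
      ∑ k : Fin (r + 1), (∏ a ∈ A, (X - C (t a))).coeff k * z ^ (k : ℕ) := by
  have hdeg : (∏ a ∈ A, (X - C (t a))).natDegree < r + 1 := by
    apply Nat.lt_succ_of_le
    calc (∏ a ∈ A, (X - C (t a))).natDegree ≤ ∑ a ∈ A, (X - C (t a)).natDegree :=
          Polynomial.natDegree_prod_le _ _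
      _ = r := by simp [Polynomial.natDegree_X_sub_C, hA]
  have h := Polynomial.eval_eq_sum_range' hdeg z
  have h2 : (∑ k : Fin (r + 1), (∏ a ∈ A, (X - C (t a))).coeff ↑k * z ^ (k : ℕ))
      = ∑ i ∈ Finset.range (r + 1), (∏ a ∈ A, (X - C (t a))).coeff i * z ^ i :=
    Fin.sum_univ_eq_sum_range (fun i => (∏ a ∈ A, (X - C (t a))).coeff i * z ^ i) (r + 1)
  rw [h2, ← h]
  simp [Polynomial.eval_prod]

lemma rank_bound {m : ℕ} {I : Type*} [Fintype I] (M : Matrix (Fin m) (Fin m) ℝ)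
    (P : Matrix (Fin m) I ℝ) (Q : Matrix I (Fin m) ℝ) (hMPQ : M = P * Q)
    (hdet : M.det ≠ 0) : m ≤ Fintype.card I := by
  have hu : IsUnit M := (Matrix.isUnit_iff_isUnit_det M).2 hdet.isUnit
  have h1 : M.rank = m := by simpa using Matrix.rank_of_isUnit M hu
  calc m = M.rank := h1.symm
    _ ≤ P.rank := by rw [hMPQ]; exact Matrix.rank_mul_le_left P Q
    _ ≤ Fintype.card I := Matrix.rank_le_card_width P

/-- Uniform Bollobás theorem (Theorem 1.2): with `|Aᵢ| = r`, `|Bᵢ| = s`, `Aᵢ ∩ Bᵢ = ∅` and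
`Aᵢ ∩ Bⱼ ≠ ∅` for `i < j`, we get `m ≤ C(r + s, r)`. -/
theorem bollobas_uniform {α : Type*} [DecidableEq α] (m r s : ℕ)
    (A B : Fin m → Finset α)
    (hr : ∀ i, (A i).card = r) (hs : ∀ i, (B i).card = s)
    (hdisj : ∀ i, A i ∩ B i = ∅)
    (hcross : ∀ i j, i < j → (A i ∩ B j).Nonempty) :
    m ≤ (r + s).choose r := by
  classical
  -- an injective labeling of the ground elements
  set U : Finset α := Finset.univ.biUnion (fun i => A i ∪ B i) with hU
  set t : α → ℝ := fun x => if h : x ∈ U then ((U.equivFin ⟨x, h⟩ : ℕ) : ℝ) else 0 with ht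
  have htinj : ∀ x ∈ U, ∀ y ∈ U, t x = t y → x = y := by
    intro x hx y hy hxy
    rw [ht] at hxy
    simp only [dif_pos hx, dif_pos hy, Nat.cast_inj, Fin.val_eq_val,
      EmbeddingLike.apply_eq_iff_eq, Subtype.mk.injEq] at hxy
    exact hxy
  -- the matrix
  set M : Matrix (Fin m) (Fin m) ℝ := fun i j => ∏ b ∈ B j, ∏ a ∈ A i, (t b - t a) with hM
  -- it is (anti-)triangular with nonzero diagonal
  have hMzero : ∀ i j, i < j → M i j = 0 := by
    intro i j hij
    obtain ⟨x, hx⟩ := hcross i j hij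
    rw [Finset.mem_inter] at hx
    refine Finset.prod_eq_zero hx.2 (Finset.prod_eq_zero hx.1 ?_)
    ring
  have hMdiag : ∀ i, M i i ≠ 0 := by
    intro i
    refine Finset.prod_ne_zero_iff.2 fun b hb => Finset.prod_ne_zero_iff.2 fun a ha => ?_
    have hab : a ≠ b := by
      intro h
      have : a ∈ A i ∩ B i := Finset.mem_inter.2 ⟨ha, h ▸ hb⟩
      rw [hdisj i] at this
      exact absurd this (Finset.notMem_empty a)
    have haU : a ∈ U := Finset.mem_biUnion.2 ⟨i, Finset.mem_univ i, Finset.mem_union_left _ ha⟩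
    have hbU : b ∈ U := Finset.mem_biUnion.2 ⟨i, Finset.mem_univ i, Finset.mem_union_right _ hb⟩
    intro h
    have h2 : t b = t a := sub_eq_zero.1 h
    exact hab (htinj a haU b hbU h2.symm)
  have hdet : M.det ≠ 0 := by
    have htri : M.transpose.BlockTriangular id := by
      intro i j hij
      exact hMzero j i hij
    have := Matrix.det_of_upperTriangular htri
    rw [Matrix.det_transpose] at this
    rw [this]
    exact Finset.prod_ne_zero_iff.2 fun i _ => hMdiag i
  -- the factorization through Sym (Fin (r+1)) s
  set c : Fin m → Fin (r + 1) → ℝ := fun i k => (∏ a ∈ A i, (X - C (t a))).coeff k with hc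
  set P : Matrix (Fin m) (Sym (Fin (r + 1)) s) ℝ := fun i μ => (μ.1.map (c i)).prod with hP
  have hcardB : ∀ j : Fin m, Fintype.card ((B j : Finset α) : Type _) = s := fun j =>
    (Fintype.card_coe (B j)).trans (hs j)
  set Q : Matrix (Sym (Fin (r + 1)) s) (Fin m) ℝ := fun μ j =>
    ∑ φ ∈ (Finset.univ : Finset (((B j : Finset α) : Type _) → Fin (r + 1))).filter
        (fun φ => symCls (hcardB j) φ = μ),
      ∏ b : ((B j : Finset α) : Type _), t b ^ ((φ b : ℕ)) with hQ
  have hMPQ : M = P * Q := by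
    ext i j
    rw [Matrix.mul_apply]
    have step1 : M i j = ∏ b ∈ B j, ∑ k : Fin (r + 1), c i k * (t b) ^ (k : ℕ) := by
      rw [hM]
      exact Finset.prod_congr rfl fun b _ => prod_linear_eq_sum (A i) (hr i) t (t b)
    have step2 : ∏ b ∈ B j, ∑ k : Fin (r + 1), c i k * (t b) ^ (k : ℕ)
        = ∏ b : ((B j : Finset α) : Type _), ∑ k : Fin (r + 1), c i k * (t b) ^ (k : ℕ) := by
      rw [← Finset.prod_attach (B j) (fun b => ∑ k : Fin (r + 1), c i k * (t b) ^ (k : ℕ))]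
      rfl
    rw [step1, step2, expand_prod_sum (hcardB j) (c i) (fun b k => (t b) ^ (k : ℕ))]
  have hbound := rank_bound M P Q hMPQ hdet
  have hcount : Fintype.card (Sym (Fin (r + 1)) s) = (r + s).choose r := by
    rw [Sym.card_sym_eq_choose]
    simp only [Fintype.card_fin]
    have h1 : r + 1 + s - 1 = r + s := by omega
    rw [h1, ← Nat.choose_symm (Nat.le_add_right r s)]
    congr 1
    omega
  rwa [hcount] at hbound
end

section
/- Let q be a prime power with q ≠ 2, n ≥ 1, and let A_1, …, A_m and B_1, …, B_m be affine subspaces of the n-dimensional affine space F_q^n. Assume the pair of families {(A_i, B_i) : 1 ≤ i ≤ m} is cross-intersecting, i.e., A_i ∩ B_i = ∅ for each 1 ≤ i ≤ m and A_i ∩ B_j ≠ ∅ whenever 1 ≤ i < j ≤ m. Then m ≤ q^n + 1. -/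
/-!
Two disjoint affine subspaces `A`, `B` are separated by a nonzero linear functional `φ` taking
the constant value `c + 1` on `A` and `c` on `B`. For a cross-intersecting family there are no
`i < j < k` with `φ j = a • φ i` and `φ k = b • φ i`, `b ≠ 0`: a point of `A i ∩ B k` and one
of `A j ∩ B k` show `φ i = c i + 1` at the latter point, so `φ j` takes the same value
`a (c i + 1)` there and on `A i ∩ B j`, i.e. `c j + 1 = c j`. Hence every line of the dual
space contains at most two of the `φ i`, which gives `m (q - 1) ≤ 2 qⁿ`, so `m ≤ qⁿ` when
`q ≥ 3`.
-/

open Pointwise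

section Separation

variable {F E : Type*} [Field F] [AddCommGroup E] [Module F E] {v u : E} {V U : Submodule F E}

theorem sub_notMem_sup_of_disjoint_vadd
    (h : Disjoint (v +ᵥ (V : Set E)) (u +ᵥ (U : Set E))) : v - u ∉ V ⊔ U := by
  intro hvu
  obtain ⟨a, ha, b, hb, hab⟩ := Submodule.mem_sup.1 hvu
  refine Set.disjoint_left.1 h (Set.mem_vadd_set.2 ⟨-a, neg_mem ha, rfl⟩)
    (Set.mem_vadd_set.2 ⟨b, hb, ?_⟩)
  rw [vadd_eq_add, vadd_eq_add, ← sub_eq_zero, ← sub_eq_zero.2 hab]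
  abel

theorem exists_dual_eq_add_one_of_disjoint_vadd
    (h : Disjoint (v +ᵥ (V : Set E)) (u +ᵥ (U : Set E))) :
    ∃ φ : Module.Dual F E, φ ≠ 0 ∧ (∀ x ∈ v +ᵥ (V : Set E), φ x = φ u + 1) ∧
      ∀ y ∈ u +ᵥ (U : Set E), φ y = φ u := by
  obtain ⟨f, hf, hker⟩ :=
    Submodule.exists_dual_map_eq_bot_of_notMem (sub_notMem_sup_of_disjoint_vadd h) inferInstance
  rw [← LinearMap.le_ker_iff_map] at hker
  set φ := (f (v - u))⁻¹ • f
  have hφ : ∀ z ∈ V ⊔ U, φ z = 0 := fun z hz => by simp [φ, LinearMap.mem_ker.1 (hker hz)]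
  have hvu : φ v = φ u + 1 := by
    have : φ (v - u) = 1 := inv_mul_cancel₀ hf
    rw [map_sub] at this
    linear_combination this
  refine ⟨φ, fun h0 => by simp [h0] at hvu, fun x hx => ?_, fun y hy => ?_⟩
  · obtain ⟨a, ha, rfl⟩ := Set.mem_vadd_set.1 hx
    rw [vadd_eq_add, map_add, hφ a (Submodule.mem_sup_left ha), add_zero, hvu]
  · obtain ⟨b, hb, rfl⟩ := Set.mem_vadd_set.1 hy
    rw [vadd_eq_add, map_add, hφ b (Submodule.mem_sup_right hb), add_zero]

end Separation

theorem notMem_span_of_cross_intersecting {F E ι : Type*} [Field F] [AddCommGroup E]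
    [Module F E] [LinearOrder ι] {A B : ι → Set E} {φ : ι → Module.Dual F E} {c : ι → F}
    (hA : ∀ i, ∀ x ∈ A i, φ i x = c i + 1) (hB : ∀ i, ∀ x ∈ B i, φ i x = c i)
    (hcross : ∀ i j, i < j → (A i ∩ B j).Nonempty) {i j k : ι} (hij : i < j) (hjk : j < k)
    (hk0 : φ k ≠ 0) (hj : φ j ∈ F ∙ φ i) : φ k ∉ F ∙ φ i := by
  intro hk
  obtain ⟨a, ha⟩ := Submodule.mem_span_singleton.1 hj
  obtain ⟨b, hb⟩ := Submodule.mem_span_singleton.1 hk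
  have hb0 : b ≠ 0 := by rintro rfl; exact hk0 (by rw [← hb, zero_smul])
  obtain ⟨x, hxAi, hxBj⟩ := hcross i j hij
  obtain ⟨y, hyAj, hyBk⟩ := hcross j k hjk
  obtain ⟨z, hzAi, hzBk⟩ := hcross i k (hij.trans hjk)
  have hxj := hB j x hxBj
  have hyj := hA j y hyAj
  have hyk := hB k y hyBk
  have hzk := hB k z hzBk
  rw [← ha] at hxj hyj
  rw [← hb] at hyk hzk
  simp only [LinearMap.smul_apply, smul_eq_mul] at hxj hyj hyk hzk
  rw [hA i x hxAi] at hxj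
  rw [hA i z hzAi] at hzk
  have hy : φ i y = c i + 1 := mul_left_cancel₀ hb0 (hyk.trans hzk.symm)
  exact one_ne_zero (by linear_combination hxj - hyj + a * hy)

theorem card_mul_le_of_notMem_span {F M ι : Type*} [Field F] [AddCommGroup M] [Module F M]
    [Finite M] [LinearOrder ι] (w : ι → M) (hw : ∀ i, w i ≠ 0)
    (h : ∀ i j k, i < j → j < k → w j ∈ F ∙ w i → w k ∉ F ∙ w i) :
    Nat.card ι * (Nat.card F - 1) ≤ 2 * Nat.card M := by
  -- A line through `0` carries at most two of the `w i`; the flag tells the later one apart.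
  let Θ : ι × Fˣ → M × Prop := fun p => ((p.2 : F) • w p.1, ∃ i < p.1, w p.1 ∈ F ∙ w i)
  have hlt : ∀ {i i' : ι} {a a' : Fˣ}, i < i' → Θ (i, a) ≠ Θ (i', a') := by
    intro i i' a a' hii' hΘ
    obtain ⟨hw', hflag⟩ := Prod.mk.inj hΘ
    have hi' : w i' ∈ F ∙ w i := by
      have : w i' = ((a' : F)⁻¹ * a) • w i := by
        rw [mul_smul, hw', inv_smul_smul₀ a'.ne_zero]
      exact this ▸ Submodule.smul_mem _ _ (Submodule.mem_span_singleton_self _)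
    obtain ⟨i₀, hi₀, hi⟩ := hflag.mpr ⟨i, hii', hi'⟩
    exact h i₀ i i' hi₀ hii' hi ((Submodule.span_singleton_le_iff_mem _ _).2 hi hi')
  have hΘ : Function.Injective Θ := by
    rintro ⟨i, a⟩ ⟨i', a'⟩ hΘ
    rcases lt_trichotomy i i' with hii' | rfl | hii'
    · exact absurd hΘ (hlt hii')
    · exact Prod.ext rfl (Units.ext (smul_left_injective F (hw i) (Prod.mk.inj hΘ).1))
    · exact absurd hΘ.symm (hlt hii')
  have := Nat.card_le_card_of_injective Θ hΘ
  rwa [Nat.card_prod, Nat.card_prod, Nat.card_units, Nat.card_eq_fintype_card (α := Prop),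
    Fintype.card_prop, mul_comm _ 2] at this

theorem hegedus_affine_bound_general
    {F : Type*} [Field F] [Fintype F] (q n m : ℕ)
    (hq : q = Fintype.card F) (hq2 : q ≠ 2)
    (A B : Fin m → Set (Fin n → F))
    (hA : ∀ i, ∃ (v : Fin n → F) (V : Submodule F (Fin n → F)),
      A i = v +ᵥ (V : Set (Fin n → F)))
    (hB : ∀ i, ∃ (u : Fin n → F) (U : Submodule F (Fin n → F)),
      B i = u +ᵥ (U : Set (Fin n → F)))
    (hdisj : ∀ i, A i ∩ B i = ∅)
    (hcross : ∀ i j, i < j → (A i ∩ B j).Nonempty) :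
    m ≤ q ^ n + 1 := by
  have hsep : ∀ i, ∃ φ : Module.Dual F (Fin n → F), φ ≠ 0 ∧
      ∃ c, (∀ x ∈ A i, φ x = c + 1) ∧ ∀ x ∈ B i, φ x = c := by
    intro i
    obtain ⟨v, V, hv⟩ := hA i
    obtain ⟨u, U, hu⟩ := hB i
    have hd : Disjoint (A i) (B i) := Set.disjoint_iff_inter_eq_empty.2 (hdisj i)
    rw [hv, hu] at hd ⊢
    obtain ⟨φ, hφ, hφA, hφB⟩ := exists_dual_eq_add_one_of_disjoint_vadd hd
    exact ⟨φ, hφ, φ u, hφA, hφB⟩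
  choose φ hφ c hφA hφB using hsep
  have := Module.finite_of_finite F (M := Module.Dual F (Fin n → F))
  have hcard := card_mul_le_of_notMem_span φ hφ fun i j k hij hjk =>
    notMem_span_of_cross_intersecting hφA hφB hcross hij hjk (hφ k)
  rw [Nat.card_fin, Module.natCard_eq_pow_finrank (K := F) (V := Module.Dual F (Fin n → F)),
    Subspace.dual_finrank_eq, Module.finrank_fin_fun, ← Fintype.card_eq_nat_card, ← hq] at hcard
  have hq3 : 3 ≤ q := by
    have : 1 < Fintype.card F := Fintype.one_lt_card
    omega
  have : m * 2 ≤ 2 * q ^ n := (Nat.mul_le_mul_left m (by omega)).trans hcard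
  omega

/-- Hegedűs' theorem (Theorem 1.4): for `q ≠ 2`, a cross-intersecting pair of families of
affine subspaces of `F_q^n` has size `m ≤ qⁿ + 1`. -/
theorem hegedus_affine_bound
    {F : Type*} [Field F] [Fintype F] (q n m : ℕ)
    (hq : q = Fintype.card F) (hq2 : q ≠ 2) (hn : 1 ≤ n)
    (A B : Fin m → Set (Fin n → F))
    (hA : ∀ i, ∃ (v : Fin n → F) (V : Submodule F (Fin n → F)),
      A i = v +ᵥ (V : Set (Fin n → F)))
    (hB : ∀ i, ∃ (u : Fin n → F) (U : Submodule F (Fin n → F)),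
      B i = u +ᵥ (U : Set (Fin n → F)))
    (hdisj : ∀ i, A i ∩ B i = ∅)
    (hcross : ∀ i j, i < j → (A i ∩ B j).Nonempty) :
    m ≤ q ^ n + 1 :=
  hegedus_affine_bound_general q n m hq hq2 A B hA hB hdisj hcross
end

section
/- Let q be a prime power and n ≥ 1. There exist affine subspaces A_1, …, A_m and B_1, …, B_m of F_q^n with m = (q^n − 1)/(q − 1) such that the pair of families {(A_i, B_i) : 1 ≤ i ≤ m} is cross-intersecting, i.e., A_i ∩ B_i = ∅ for each 1 ≤ i ≤ m and A_i ∩ B_j ≠ ∅ whenever 1 ≤ i < j ≤ m. -/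
/-!
Index both families by the points of the projective space of the dual of `F^n`; there are
`(qⁿ - 1)/(q - 1)` of them. A point represented by the functional `f` contributes the parallel
hyperplanes `A = {f = 1}` and `B = {f = 0}`, which are disjoint. For non-proportional `f` and
`g` the kernel of `g` is not contained in that of `f`, so some `x` has `f x = 1` and `g x = 0`:
`A_f` meets `B_g` for all distinct indices, not only for `i < j`.
-/

open Pointwise

open Module

open scoped LinearAlgebra.Projectivization

theorem LinearMap.preimage_singleton_eq_vadd_ker_s11 {R M N : Type*} [Ring R] [AddCommGroup M]
    [AddCommGroup N] [Module R M] [Module R N] (f : M →ₗ[R] N) {x₀ : M} {c : N} (h : f x₀ = c) :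
    f ⁻¹' {c} = x₀ +ᵥ (ker f : Set M) := by
  ext x
  simp [Set.mem_vadd_set_iff_neg_vadd_mem, ← h, sub_eq_zero, neg_add_eq_sub]

namespace Projectivization

variable {K V : Type*} [Field K] [AddCommGroup V] [Module K V]

theorem not_ker_rep_le_ker_rep {p p' : ℙ K (Dual K V)} (h : p ≠ p') :
    ¬ LinearMap.ker p'.rep ≤ LinearMap.ker p.rep := by
  intro hle
  have hspan := mem_span_of_iInf_ker_le_ker (ι := Unit) (L := fun _ ↦ p'.rep) (by simpa using hle)
  obtain ⟨c, hc⟩ := Submodule.mem_span_singleton.1 (by simpa using hspan)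
  apply h
  rw [← p.mk_rep, ← p'.mk_rep, mk_eq_mk_iff']
  exact ⟨c, hc⟩

theorem exists_rep_apply_eq_one_and_rep_apply_eq_zero {p p' : ℙ K (Dual K V)} (h : p ≠ p') :
    ∃ x, p.rep x = 1 ∧ p'.rep x = 0 := by
  obtain ⟨y, hy', hy⟩ := SetLike.not_le_iff_exists.1 (not_ker_rep_le_ker_rep h)
  rw [LinearMap.mem_ker] at hy hy'
  exact ⟨(p.rep y)⁻¹ • y, by simp [hy], by simp [hy']⟩

end Projectivization

theorem exists_affine_cross_intersecting_of_size_general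
    {F : Type*} [Field F] [Fintype F] (q n : ℕ)
    (hq : q = Fintype.card F) :
    ∃ (m : ℕ) (A B : Fin m → Set (Fin n → F)),
      m = (q ^ n - 1) / (q - 1) ∧
      (∀ i, ∃ (v : Fin n → F) (V : Submodule F (Fin n → F)),
        A i = v +ᵥ (V : Set (Fin n → F))) ∧
      (∀ i, ∃ (u : Fin n → F) (U : Submodule F (Fin n → F)),
        B i = u +ᵥ (U : Set (Fin n → F))) ∧
      (∀ i, A i ∩ B i = ∅) ∧
      (∀ i j, i < j → (A i ∩ B j).Nonempty) := by
  have : Finite (Dual F (Fin n → F)) := Module.finite_of_finite F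
  let e := (Finite.equivFin (ℙ F (Dual F (Fin n → F)))).symm
  refine ⟨_, fun i ↦ (e i).rep ⁻¹' {1}, fun i ↦ (e i).rep ⁻¹' {0}, ?_, fun i ↦ ?_, fun i ↦ ?_,
    fun i ↦ ?_, fun i j hij ↦ ?_⟩
  · simp [Projectivization.card'', natCard_eq_pow_finrank (K := F), Subspace.dual_finrank_eq, hq]
  · obtain ⟨v, hv⟩ := LinearMap.surjective_of_ne_zero (e i).rep_nonzero 1
    exact ⟨v, _, (e i).rep.preimage_singleton_eq_vadd_ker_s11 hv⟩
  · exact ⟨0, _, (e i).rep.preimage_singleton_eq_vadd_ker_s11 (map_zero _)⟩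
  · ext; simp +contextual
  · exact (e i).exists_rep_apply_eq_one_and_rep_apply_eq_zero (e.injective.ne hij.ne)

/-- Hegedűs' construction (Theorem 1.5): for any prime power `q` and `n ≥ 1` there is a
cross-intersecting pair of families of affine subspaces of `F_q^n` of size
`m = (qⁿ − 1)/(q − 1)`. -/
theorem exists_affine_cross_intersecting_of_size
    {F : Type*} [Field F] [Fintype F] (q n : ℕ)
    (hq : q = Fintype.card F) (hn : 1 ≤ n) :
    ∃ (m : ℕ) (A B : Fin m → Set (Fin n → F)),
      m = (q ^ n - 1) / (q - 1) ∧
      (∀ i, ∃ (v : Fin n → F) (V : Submodule F (Fin n → F)),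
        A i = v +ᵥ (V : Set (Fin n → F))) ∧
      (∀ i, ∃ (u : Fin n → F) (U : Submodule F (Fin n → F)),
        B i = u +ᵥ (U : Set (Fin n → F))) ∧
      (∀ i, A i ∩ B i = ∅) ∧
      (∀ i j, i < j → (A i ∩ B j).Nonempty) :=
  exists_affine_cross_intersecting_of_size_general q n hq
end
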